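/- arXiv:1703.06075 — 3 statements merged into one kernel-verified Lean document; each statement's English description precedes it below -/
import Mathlib

section
/- Let f : ℕ → ℝ be a real sequence and let m, n, q, N be positive integers with N ≥ q and q even. Then Σ_{k=1}^{N} (−1)^{k−1} ( [f(nk) − f(nk + mnq)] · Π_{j=1}^{m−1} f(nk + jnq) ) = Σ_{k=1}^{q} (−1)^{k−1} Π_{j=0}^{m−1} f(nk + jnq) + (−1)^{N−1} Σ_{k=1}^{q} (−1)^{k−1} Π_{j=0}^{m−1} f(nk + nN + jnq). -/
/-!
Put `g k = (-1)^(k-1) ∏_{j<m} f(nk + jnq)`. Splitting off the factor `j = 0` of `g k`, resp. the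
factor `j = m - 1` of `g (k + q)`, shows that the `k`-th summand on the left is `g k - g (k + q)`,
the sign being unchanged because `q` is even. A sum of `N` differences `g k - g (k + q)`
telescopes to the first `q` terms minus the `q` terms following the `N`-th one.
-/

namespace Finset

@[to_additive sum_Icc_one_eq_sum_range]
theorem prod_Icc_one_eq_prod_range {M : Type*} [CommMonoid M] (F : ℕ → M) (n : ℕ) :
    ∏ k ∈ Icc 1 n, F k = ∏ k ∈ range n, F (k + 1) := by
  rw [← Ico_add_one_right_eq_Icc, prod_Ico_eq_prod_range]
  simp only [Nat.add_sub_cancel, add_comm]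

theorem sum_range_sub_shift {M : Type*} [AddCommGroup M] (g : ℕ → M) (N q : ℕ) :
    ∑ k ∈ range N, (g k - g (k + q)) = ∑ k ∈ range q, g k - ∑ k ∈ range q, g (N + k) := by
  -- split `∑ k < N + q, g k` after its first `N` terms and after its first `q` terms
  rw [sum_sub_distrib, sub_eq_sub_iff_add_eq_add, ← sum_range_add]
  simp only [add_comm _ q]
  rw [← sum_range_add, add_comm]

theorem sum_Icc_one_sub_shift {M : Type*} [AddCommGroup M] (g : ℕ → M) (N q : ℕ) :
    ∑ k ∈ Icc 1 N, (g k - g (k + q)) = ∑ k ∈ Icc 1 q, g k - ∑ k ∈ Icc 1 q, g (k + N) := by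
  simp only [sum_Icc_one_eq_sum_range]
  convert sum_range_sub_shift (fun k => g (k + 1)) N q using 4 <;>
    simp only [add_right_comm, add_comm N]

theorem sub_mul_prod_Icc_one_eq_prod_range_sub {R : Type*} [CommRing R] (F : ℕ → R) {m : ℕ}
    (hm : 0 < m) :
    (F 0 - F m) * ∏ j ∈ Icc 1 (m - 1), F j = ∏ j ∈ range m, F j - ∏ j ∈ range m, F (j + 1) := by
  obtain ⟨m, rfl⟩ := Nat.exists_eq_add_of_lt hm
  rw [zero_add, Nat.add_sub_cancel, prod_Icc_one_eq_prod_range, prod_range_succ',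
    prod_range_succ]
  ring

end Finset

open Finset

theorem pow_add_sub_one_of_one_le {M : Type*} [Monoid M] (a : M) {k : ℕ} (hk : 1 ≤ k) (l : ℕ) :
    a ^ (k + l - 1) = a ^ (k - 1) * a ^ l := by
  rw [← pow_add, Nat.sub_add_comm hk]

theorem stmt_1_general (f : ℕ → ℝ) (m n q N : ℕ) (hm : 0 < m)
    (hN : 0 < N) (hqeven : Even q) :
    ∑ k ∈ Finset.Icc 1 N, (-1 : ℝ) ^ (k - 1) *
        ((f (n * k) - f (n * k + m * n * q)) * ∏ j ∈ Finset.Icc 1 (m - 1), f (n * k + j * n * q))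
      = ∑ k ∈ Finset.Icc 1 q, (-1 : ℝ) ^ (k - 1) * ∏ j ∈ Finset.range m, f (n * k + j * n * q)
        + (-1 : ℝ) ^ (N - 1) *
          ∑ k ∈ Finset.Icc 1 q, (-1 : ℝ) ^ (k - 1) *
            ∏ j ∈ Finset.range m, f (n * k + n * N + j * n * q) := by
  set g : ℕ → ℝ := fun k => (-1) ^ (k - 1) * ∏ j ∈ range m, f (n * k + j * n * q)
  have hsummand : ∀ k ∈ Icc 1 N, (-1 : ℝ) ^ (k - 1) *
      ((f (n * k) - f (n * k + m * n * q)) * ∏ j ∈ Icc 1 (m - 1), f (n * k + j * n * q))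
      = g k - g (k + q) := by
    intro k hk
    have hshift : ∀ j, n * (k + q) + j * n * q = n * k + (j + 1) * n * q := fun j => by ring
    simp only [g, pow_add_sub_one_of_one_le (-1 : ℝ) (mem_Icc.1 hk).1, hqeven.neg_one_pow, mul_one, hshift,
      ← mul_sub]
    rw [← sub_mul_prod_Icc_one_eq_prod_range_sub (fun j => f (n * k + j * n * q)) hm]
    simp
  have htail : ∀ k ∈ Icc 1 q, g (k + N) = -((-1) ^ (N - 1) *
      ((-1) ^ (k - 1) * ∏ j ∈ range m, f (n * k + n * N + j * n * q))) := by
    intro k hk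
    have hshift : ∀ j, n * (k + N) + j * n * q = n * k + n * N + j * n * q := fun j => by ring
    have hpow : (-1 : ℝ) ^ N = -(-1) ^ (N - 1) := by
      rw [← Nat.sub_add_cancel hN, pow_succ, mul_neg_one, Nat.add_sub_cancel]
    simp only [g, pow_add_sub_one_of_one_le (-1 : ℝ) (mem_Icc.1 hk).1, hpow, hshift]
    ring
  rw [sum_congr rfl hsummand, sum_Icc_one_sub_shift, sum_congr rfl htail, sum_neg_distrib,
    ← mul_sum, sub_neg_eq_add]

/-- Alternating telescoping summation identity (Lemma 2, `q` even). -/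
theorem stmt_1 (f : ℕ → ℝ) (m n q N : ℕ) (hm : 0 < m) (hn : 0 < n) (hq : 0 < q)
    (hN : 0 < N) (hNq : q ≤ N) (hqeven : Even q) :
    ∑ k ∈ Finset.Icc 1 N, (-1 : ℝ) ^ (k - 1) *
        ((f (n * k) - f (n * k + m * n * q)) * ∏ j ∈ Finset.Icc 1 (m - 1), f (n * k + j * n * q))
      = ∑ k ∈ Finset.Icc 1 q, (-1 : ℝ) ^ (k - 1) * ∏ j ∈ Finset.range m, f (n * k + j * n * q)
        + (-1 : ℝ) ^ (N - 1) *
          ∑ k ∈ Finset.Icc 1 q, (-1 : ℝ) ^ (k - 1) *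
            ∏ j ∈ Finset.range m, f (n * k + n * N + j * n * q) :=
  stmt_1_general f m n q N hm hN hqeven
end

section
/- Let f : ℕ → ℝ be a real sequence and let m, n, q, N be positive integers with N ≥ q and q odd. Then Σ_{k=1}^{N} (−1)^{k−1} ( [f(nk) + f(nk + mnq)] · Π_{j=1}^{m−1} f(nk + jnq) ) = Σ_{k=1}^{q} (−1)^{k−1} Π_{j=0}^{m−1} f(nk + jnq) + (−1)^{N−1} Σ_{k=1}^{q} (−1)^{k−1} Π_{j=0}^{m−1} f(nk + nN + jnq). -/
/-!
With `g k = ∏_{j<m} f (n k + j n q)`, the `k`-th summand is `(-1)^(k-1) (g k + g (k + q))`: the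
bracket supplies the first factor of `g k` and the last factor of `g (k + q)`. As `q` is odd,
`(-1)^(k-1) g (k + q)` is minus the `(k + q)`-th term of the alternating sum of `g`, so the sum
telescopes to its terms with `k ≤ q` and, with sign `(-1)^(N-1)`, the `q` terms after `N`.
-/

open Finset

@[to_additive Finset.sum_Icc_one_eq_sum_range]
theorem Finset.prod_Icc_one_eq_prod_range_s2 {M : Type*} [CommMonoid M] (u : ℕ → M) (N : ℕ) :
    ∏ k ∈ Icc 1 N, u k = ∏ i ∈ range N, u (i + 1) := by
  induction N with
  | zero => rfl
  | succ N ih => rw [prod_Icc_succ_top (by omega), ih, prod_range_succ]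

theorem add_mul_prod_Icc_one_eq {R : Type*} [CommSemiring R] (u : ℕ → R) {m : ℕ} (hm : 0 < m) :
    (u 0 + u m) * ∏ j ∈ Icc 1 (m - 1), u j =
      ∏ j ∈ range m, u j + ∏ j ∈ range m, u (j + 1) := by
  obtain ⟨m, rfl⟩ := Nat.exists_eq_add_of_lt hm
  rw [Nat.zero_add, Nat.add_sub_cancel, prod_Icc_one_eq_prod_range_s2, prod_range_succ',
    prod_range_succ]
  ring

theorem sum_range_neg_one_pow_mul_add_odd_shift {R : Type*} [CommRing R] (g : ℕ → R) {q : ℕ}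
    (hq : Odd q) (N : ℕ) :
    ∑ i ∈ range N, (-1) ^ i * (g i + g (i + q)) =
      ∑ i ∈ range q, (-1) ^ i * g i - (-1) ^ N * ∑ i ∈ range q, (-1) ^ i * g (N + i) := by
  set F : ℕ → R := fun i => (-1) ^ i * g i
  have hsplit_q := sum_range_add F q N
  have hsplit_N := sum_range_add F N q
  rw [add_comm q N] at hsplit_q
  calc ∑ i ∈ range N, (-1) ^ i * (g i + g (i + q))
      = ∑ i ∈ range N, F i - ∑ i ∈ range N, F (q + i) := by
        rw [← sum_sub_distrib]
        refine sum_congr rfl fun i _ => ?_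
        simp only [F, pow_add, hq.neg_one_pow, add_comm q i]
        ring
    _ = ∑ i ∈ range q, F i - ∑ i ∈ range q, F (N + i) := by
        linear_combination hsplit_q - hsplit_N
    _ = _ := by simp only [F, pow_add, mul_sum, mul_assoc]

theorem sum_Icc_neg_one_pow_mul_add_odd_shift {R : Type*} [CommRing R] (g : ℕ → R) {q : ℕ}
    (hq : Odd q) {N : ℕ} (hN : 0 < N) :
    ∑ k ∈ Icc 1 N, (-1) ^ (k - 1) * (g k + g (k + q)) =
      ∑ k ∈ Icc 1 q, (-1) ^ (k - 1) * g k +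
        (-1) ^ (N - 1) * ∑ k ∈ Icc 1 q, (-1) ^ (k - 1) * g (k + N) := by
  obtain ⟨N, rfl⟩ := Nat.exists_eq_add_of_lt hN
  simp only [sum_Icc_one_eq_sum_range, Nat.add_sub_cancel, Nat.zero_add,
    Nat.add_right_comm _ 1 q]
  rw [sum_range_neg_one_pow_mul_add_odd_shift (fun i => g (i + 1)) hq (N + 1), pow_succ]
  simp only [show ∀ i, N + 1 + i + 1 = i + 1 + (N + 1) by omega]
  ring

theorem stmt_2_general (f : ℕ → ℝ) (m n q N : ℕ) (hm : 0 < m) (hN : 0 < N) (hqodd : Odd q) :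
    ∑ k ∈ Finset.Icc 1 N, (-1 : ℝ) ^ (k - 1) *
        ((f (n * k) + f (n * k + m * n * q)) * ∏ j ∈ Finset.Icc 1 (m - 1), f (n * k + j * n * q))
      = ∑ k ∈ Finset.Icc 1 q, (-1 : ℝ) ^ (k - 1) * ∏ j ∈ Finset.range m, f (n * k + j * n * q)
        + (-1 : ℝ) ^ (N - 1) *
          ∑ k ∈ Finset.Icc 1 q, (-1 : ℝ) ^ (k - 1) *
            ∏ j ∈ Finset.range m, f (n * k + n * N + j * n * q) := by
  set g : ℕ → ℝ := fun k => ∏ j ∈ range m, f (n * k + j * n * q)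
  have hsummand (k : ℕ) :
      (f (n * k) + f (n * k + m * n * q)) * ∏ j ∈ Icc 1 (m - 1), f (n * k + j * n * q) =
        g k + g (k + q) := by
    have hsplit := add_mul_prod_Icc_one_eq (fun j => f (n * k + j * n * q)) hm
    simp only [zero_mul, add_zero] at hsplit
    rw [hsplit]
    congr 1
    exact prod_congr rfl fun j _ => by ring_nf
  have hshifted (k : ℕ) : ∏ j ∈ range m, f (n * k + n * N + j * n * q) = g (k + N) :=
    prod_congr rfl fun j _ => by ring_nf
  simp only [hsummand, hshifted]
  exact sum_Icc_neg_one_pow_mul_add_odd_shift g hqodd hN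

/-- Alternating telescoping summation identity (Lemma 3, `q` odd). -/
theorem stmt_2 (f : ℕ → ℝ) (m n q N : ℕ) (hm : 0 < m) (hn : 0 < n) (hq : 0 < q)
    (hN : 0 < N) (hNq : q ≤ N) (hqodd : Odd q) :
    ∑ k ∈ Finset.Icc 1 N, (-1 : ℝ) ^ (k - 1) *
        ((f (n * k) + f (n * k + m * n * q)) * ∏ j ∈ Finset.Icc 1 (m - 1), f (n * k + j * n * q))
      = ∑ k ∈ Finset.Icc 1 q, (-1 : ℝ) ^ (k - 1) * ∏ j ∈ Finset.range m, f (n * k + j * n * q)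
        + (-1 : ℝ) ^ (N - 1) *
          ∑ k ∈ Finset.Icc 1 q, (-1 : ℝ) ^ (k - 1) *
            ∏ j ∈ Finset.range m, f (n * k + n * N + j * n * q) :=
  stmt_2_general f m n q N hm hN hqodd
end

section
/- Let m, n, q, p be positive integers. Then the series Σ_{k=1}^{∞} (−1)^{nk−1} · ( Π_{j=1}^{m−1} F_{nk+jnq+np} ) / ( Π_{j=0}^{m} F_{nk+jnq} ) converges, and its sum equals φ^{mnp}·q / (F_{mnq}·F_{np}) − (1 / (F_{mnq}·F_{np})) · Σ_{k=1}^{q} Π_{j=0}^{m−1} ( F_{nk+jnq+np} / F_{nk+jnq} ), where φ = (1+√5)/2 is the golden ratio. -/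
open Filter Topology Finset
open scoped goldenRatio

/-!
Write `r(x) = ∏_{j<m} F_{x+jd+s} / F_{x+jd}` with `d = nq`, `s = np`. In `r(x + d) − r(x)` all
factors cancel except the extreme ones, and Vajda's identity
`F_{x+i} F_{x+j} − F_x F_{x+i+j} = (−1)^x F_i F_j` turns what is left into `F_{md} F_s` times the
`k`-th term of the series at `x = nk`. The series therefore telescopes with step `q`, and since
`F_{x+s} / F_x → φ^s`, we get `r(x) → φ^{ms}`, so the partial sums tend to
`(q φ^{mnp} − Σ_{k=1}^{q} r(nk)) / (F_{mnq} F_{np})`.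
-/

@[to_additive sum_Icc_one_eq_sum_range_succ]
lemma prod_Icc_one_eq_prod_range_succ {M : Type*} [CommMonoid M] (f : ℕ → M) (n : ℕ) :
    ∏ k ∈ Icc 1 n, f k = ∏ i ∈ range n, f (i + 1) := by
  rw [← Ico_add_one_right_eq_Icc, prod_Ico_eq_prod_range, Nat.add_sub_cancel]
  simp_rw [add_comm 1]

lemma sum_range_shift_sub {G : Type*} [AddCommGroup G] (f : ℕ → G) (q N : ℕ) :
    ∑ i ∈ range N, (f (i + q) - f i) = ∑ i ∈ range q, f (N + i) - ∑ i ∈ range q, f i := by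
  rw [sum_sub_distrib, sub_eq_sub_iff_add_eq_add, add_comm (∑ i ∈ range q, f (N + i)),
    ← sum_range_add, add_comm N q, sum_range_add, add_comm]
  simp only [add_comm _ q]

lemma tendsto_sum_range_shift_sub {G : Type*} [TopologicalSpace G] [AddCommGroup G]
    [IsTopologicalAddGroup G] {f : ℕ → G} {L : G} (hf : Tendsto f atTop (𝓝 L)) (q : ℕ) :
    Tendsto (fun N => ∑ i ∈ range N, (f (i + q) - f i)) atTop
      (𝓝 (q • L - ∑ i ∈ range q, f i)) := by
  simp_rw [sum_range_shift_sub]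
  refine Tendsto.sub_const ?_ _
  simpa [add_comm] using tendsto_finsetSum (range q) fun i _ => hf.comp (tendsto_add_atTop_nat i)

lemma tendsto_fib_add_div_fib (c : ℕ) :
    Tendsto (fun k => (Nat.fib (k + c) / Nat.fib k : ℝ)) atTop (𝓝 (φ ^ c)) := by
  induction c with
  | zero =>
    refine tendsto_const_nhds.congr' ?_
    filter_upwards [eventually_gt_atTop 0] with k hk
    have : (Nat.fib k : ℝ) ≠ 0 := Nat.cast_ne_zero.2 (Nat.fib_pos.2 hk).ne'
    simp [this]
  | succ c ih =>
    rw [pow_succ']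
    refine ((tendsto_fib_succ_div_fib_atTop.comp (tendsto_add_atTop_nat c)).mul ih).congr' ?_
    filter_upwards [eventually_gt_atTop 0] with k hk
    have : (Nat.fib (k + c) : ℝ) ≠ 0 := Nat.cast_ne_zero.2 (Nat.fib_pos.2 (by omega)).ne'
    simp only [Function.comp_apply, ← add_assoc]
    field_simp

lemma fib_add_mul_fib_add_sub_fib_mul_fib_add_add (a i j : ℕ) :
    (Nat.fib (a + i) * Nat.fib (a + j) - Nat.fib a * Nat.fib (a + i + j) : ℝ) =
      (-1) ^ a * Nat.fib i * Nat.fib j := by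
  have hψφ : φ ^ a * ψ ^ a = (-1) ^ a := by rw [← mul_pow, Real.goldenRatio_mul_goldenConj]
  simp only [Real.coe_fib_eq, pow_add]
  field_simp
  linear_combination (φ ^ i - ψ ^ i) * (φ ^ j - ψ ^ j) * hψφ

noncomputable def fibRatioProd (m d s x : ℕ) : ℝ :=
  ∏ j ∈ range m, (Nat.fib (x + j * d + s) / Nat.fib (x + j * d) : ℝ)

lemma fibRatioProd_add_sub {m : ℕ} (hm : 0 < m) (d s : ℕ) {x : ℕ} (hx : 0 < x) :
    fibRatioProd m d s (x + d) - fibRatioProd m d s x =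
      (-1) ^ (x - 1) * (Nat.fib (m * d) * Nat.fib s) *
        (∏ j ∈ Icc 1 (m - 1), (Nat.fib (x + j * d + s) : ℝ)) /
        ∏ j ∈ range (m + 1), (Nat.fib (x + j * d) : ℝ) := by
  obtain ⟨l, rfl⟩ := Nat.exists_eq_add_of_lt hm
  have hF (j : ℕ) : (Nat.fib (x + j * d) : ℝ) ≠ 0 :=
    Nat.cast_ne_zero.2 (Nat.fib_pos.2 (by omega)).ne'
  have hshift (j : ℕ) : x + d + j * d = x + (j + 1) * d := by ring
  have hsign : (-1 : ℝ) ^ (x - 1) = -(-1) ^ x := by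
    obtain ⟨y, rfl⟩ := Nat.exists_eq_add_of_lt hx
    simp [pow_succ]
  have hvajda := fib_add_mul_fib_add_sub_fib_mul_fib_add_add x ((l + 1) * d) s
  simp only [fibRatioProd, prod_div_distrib, hshift, prod_Icc_one_eq_prod_range_succ, zero_add,
    Nat.add_sub_cancel]
  -- split off the top factor of the shifted products and the bottom factor of the others
  rw [prod_range_succ _ l, prod_range_succ _ l, prod_range_succ' _ l, prod_range_succ' _ l,
    prod_range_succ _ (l + 1), prod_range_succ' _ l]
  have hB : ∏ i ∈ range l, (Nat.fib (x + (i + 1) * d) : ℝ) ≠ 0 :=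
    prod_ne_zero_iff.2 fun j _ => hF _
  have h0 : (Nat.fib x : ℝ) ≠ 0 := by simpa using hF 0
  simp only [zero_mul, add_zero]
  field_simp [hF (l + 1)]
  rw [hsign]
  linear_combination (-∏ i ∈ range l, (Nat.fib (x + (i + 1) * d + s) : ℝ)) * hvajda

lemma tendsto_fibRatioProd (m d s : ℕ) :
    Tendsto (fibRatioProd m d s) atTop (𝓝 (φ ^ (m * s))) := by
  have := tendsto_finsetProd (range m) fun j _ =>
    (tendsto_fib_add_div_fib s).comp (tendsto_add_atTop_nat (j * d))
  rwa [prod_const, card_range, ← pow_mul, mul_comm] at this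

/-- Theorem (general alternating sum with shifted Fibonacci numerators):
`Σ_{k=1}^{∞} (−1)^{nk−1} (Π_{j=1}^{m−1} F_{nk+jnq+np}) / (Π_{j=0}^{m} F_{nk+jnq})
  = φ^{mnp} q/(F_{mnq} F_{np}) − (1/(F_{mnq} F_{np})) Σ_{k=1}^{q} Π_{j=0}^{m−1} F_{nk+jnq+np}/F_{nk+jnq}`,
where `φ = (1+√5)/2`. -/
theorem stmt_8 (m n q p : ℕ) (hm : 0 < m) (hn : 0 < n) (hq : 0 < q) (hp : 0 < p) :
    Tendsto (fun N => ∑ k ∈ Finset.Icc 1 N,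
        (-1 : ℝ) ^ (n * k - 1) *
          (∏ j ∈ Finset.Icc 1 (m - 1), (Nat.fib (n * k + j * n * q + n * p) : ℝ)) /
          ∏ j ∈ Finset.range (m + 1), (Nat.fib (n * k + j * n * q) : ℝ))
      atTop
      (𝓝 (((1 + Real.sqrt 5) / 2) ^ (m * n * p) * (q : ℝ) /
          ((Nat.fib (m * n * q) : ℝ) * (Nat.fib (n * p) : ℝ))
        - (1 / ((Nat.fib (m * n * q) : ℝ) * (Nat.fib (n * p) : ℝ))) *
          ∑ k ∈ Finset.Icc 1 q, ∏ j ∈ Finset.range m,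
            (Nat.fib (n * k + j * n * q + n * p) : ℝ) / (Nat.fib (n * k + j * n * q) : ℝ))) := by
  set C : ℝ := Nat.fib (m * n * q) * Nat.fib (n * p)
  have hC : C ≠ 0 := mul_ne_zero (Nat.cast_ne_zero.2 (Nat.fib_pos.2 (by positivity)).ne')
    (Nat.cast_ne_zero.2 (Nat.fib_pos.2 (by positivity)).ne')
  set a : ℕ → ℝ := fun i => fibRatioProd m (n * q) (n * p) (n * (i + 1))
  have ha : Tendsto a atTop (𝓝 (φ ^ (m * n * p))) := by
    rw [mul_assoc]
    refine (tendsto_fibRatioProd m (n * q) (n * p)).comp ?_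
    exact (tendsto_id.const_mul_atTop' hn).comp (tendsto_add_atTop_nat 1)
  have hterm (i : ℕ) : (-1 : ℝ) ^ (n * (i + 1) - 1) *
      (∏ j ∈ Icc 1 (m - 1), (Nat.fib (n * (i + 1) + j * n * q + n * p) : ℝ)) /
      ∏ j ∈ range (m + 1), (Nat.fib (n * (i + 1) + j * n * q) : ℝ) = (a (i + q) - a i) / C := by
    have hdiff := fibRatioProd_add_sub hm (n * q) (n * p) (x := n * (i + 1)) (by positivity)
    simp only [← mul_assoc _ n q] at hdiff
    simp only [a, show n * (i + q + 1) = n * (i + 1) + n * q by ring, hdiff]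
    field_simp
    ring
  simp_rw [sum_Icc_one_eq_sum_range_succ, hterm, ← sum_div]
  convert (tendsto_sum_range_shift_sub ha q).div_const C using 2
  simp only [a, fibRatioProd, ← mul_assoc _ n q, nsmul_eq_mul, Real.goldenRatio]
  ring
end
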